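/- Let (f,g) ∈ 𝒜 satisfy the single overlapping property (So). If p ∈ F₁\W belongs to the orbit O₊(0) of 0 (in particular p ≠ f(1), so 𝓕(p) is defined), then 𝓕(p) ∈ O₊(0). Symmetrically, if p ∈ G₁\W belongs to O₊(1), then 𝓖(p) ∈ O₊(1). -/

import Mathlib

/-! A point `p ∈ O₊(0)` with `p < g 0` cannot be reached by a last application of `g`, so
`p = f z` with `z ∈ O₊(0)`, and `f² 1 ≤ p` forces `z ≥ f 1 > g 0`. By (So), a point `y ≥ g 0` of
`O₊(0)` outside `G₁` lies above `g² 0 > f 1`, hence outside `f(I)`; so `y = g z` with `z ∈ O₊(0)`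
and `z > g 0`. Thus "in `O₊(0)` and `≥ g 0`" survives every application of `g⁻¹` before the first
entry into `G₁`. The statement for `𝓖` is the mirror image. -/

open Set Function MeasureTheory

noncomputable section

namespace IFSPaper

/-- The closed unit interval `I = [0,1]` as a subset of `ℝ`. -/
def unitI : Set ℝ := Set.Icc 0 1

/-- Membership in the class `𝒜`: `f, g : I → I` are `C¹` diffeomorphisms onto their
images with `f 0 = 0`, `g 1 = 1`, `f x < x < g x` on `(0,1)` and `0 < g 0 < f 1 < 1`. -/
structure MemA (f g : ℝ → ℝ) : Prop where
  f_maps : Set.MapsTo f unitI unitI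
  g_maps : Set.MapsTo g unitI unitI
  f_c1 : ContDiff ℝ 1 f
  g_c1 : ContDiff ℝ 1 g
  f_inj : Set.InjOn f unitI
  g_inj : Set.InjOn g unitI
  f_deriv_ne : ∀ x ∈ unitI, deriv f x ≠ 0
  g_deriv_ne : ∀ x ∈ unitI, deriv g x ≠ 0
  f_zero : f 0 = 0
  g_one : g 1 = 1
  f_lt_id : ∀ x ∈ Set.Ioo (0:ℝ) 1, f x < x
  id_lt_g : ∀ x ∈ Set.Ioo (0:ℝ) 1, x < g x
  g0_pos : 0 < g 0
  g0_lt_f1 : g 0 < f 1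
  f1_lt_one : f 1 < 1

/-- The element of the semigroup `⟨f,g⟩₊` associated to a word in the two generators
(`true ↦ f`, `false ↦ g`). -/
def word (f g : ℝ → ℝ) : List Bool → ℝ → ℝ
  | [] => id
  | b :: t => (if b then f else g) ∘ word f g t

/-- The semigroup orbit `O₊(x) = {φ x : φ ∈ ⟨f,g⟩₊}` of a point `x`. -/
def orbitP (f g : ℝ → ℝ) (x : ℝ) : Set ℝ :=
  {y | ∃ w : List Bool, w ≠ [] ∧ word f g w x = y}

/-- `K` is a minimal set for the action of `⟨f,g⟩₊` on `I`. -/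
def IsMinimalSet (f g : ℝ → ℝ) (K : Set ℝ) : Prop :=
  K.Nonempty ∧ K ⊆ unitI ∧ ∀ x ∈ K, closure (orbitP f g x) = K

/-- The overlapping region `W = [g 0, f 1]`. -/
def ovW (f g : ℝ → ℝ) : Set ℝ := Set.Icc (g 0) (f 1)

/-- The fundamental domain `Fₙ = [f^[n+1] 1, f^[n] 1]`. -/
def Fint (f : ℝ → ℝ) (n : ℕ) : Set ℝ := Set.Icc (f^[n+1] 1) (f^[n] 1)

/-- The fundamental domain `Gₙ = [g^[n] 0, g^[n+1] 0]`. -/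
def Gint (g : ℝ → ℝ) (n : ℕ) : Set ℝ := Set.Icc (g^[n] 0) (g^[n+1] 0)

/-- Single overlapping property `So`: `f² 1 < g 0` and `f 1 < g² 0`. -/
def So (f g : ℝ → ℝ) : Prop := f (f 1) < g 0 ∧ f 1 < g (g 0)

/-- A (nonempty) closed bounded interval. -/
def IsClosedInterval (A : Set ℝ) : Prop := ∃ a b : ℝ, a ≤ b ∧ A = Set.Icc a b

/-- A closed bounded interval with nonempty interior. -/
def IsNondegClosedInterval (A : Set ℝ) : Prop := ∃ a b : ℝ, a < b ∧ A = Set.Icc a b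

/-- A nonempty open bounded interval. -/
def IsOpenInterval (J : Set ℝ) : Prop := ∃ a b : ℝ, a < b ∧ J = Set.Ioo a b

/-- Hole property `Ho` witnessed by the pair of holes `(Hf, Hg)`. -/
def HoleAt (f g : ℝ → ℝ) (Hf Hg : Set ℝ) : Prop :=
  IsNondegClosedInterval Hf ∧ IsNondegClosedInterval Hg ∧
  Hf ⊆ interior (Fint f 1 \ ovW f g) ∧
  Hg ⊆ interior (Gint g 1 \ ovW f g) ∧
  g '' Hf = Hg ∧ f '' Hg = Hf

/-- Hole property `Ho`. -/
def Ho (f g : ℝ → ℝ) : Prop := ∃ Hf Hg : Set ℝ, HoleAt f g Hf Hg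

/-- The induced (first-return) map `𝓕 : F₁ \ {f 1} → G₁`,
`𝓕 x = g^[-n x] (f⁻¹ x)` where `n x` is least with `g^[-n x] (f⁻¹ x) ∈ G₁`. -/
def calF (f g : ℝ → ℝ) (x : ℝ) : ℝ :=
  (Function.invFunOn g unitI)^[sInf {n : ℕ |
      (Function.invFunOn g unitI)^[n] (Function.invFunOn f unitI x) ∈ Gint g 1}]
    (Function.invFunOn f unitI x)

/-- The induced (first-return) map `𝓖 : G₁ \ {g 0} → F₁`. -/
def calG (f g : ℝ → ℝ) (x : ℝ) : ℝ :=
  (Function.invFunOn f unitI)^[sInf {n : ℕ |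
      (Function.invFunOn f unitI)^[n] (Function.invFunOn g unitI x) ∈ Fint f 1}]
    (Function.invFunOn g unitI x)

/-- Eventual expansion property `Ee`: `𝓕` is uniformly expanding outside `Hf`
and `𝓖` outside `Hg` (at all points where the derivative makes sense). -/
def Ee (f g : ℝ → ℝ) (Hf Hg : Set ℝ) : Prop :=
  ∃ μ : ℝ, 1 < μ ∧
    (∀ y ∈ Fint f 1 \ Hf, DifferentiableAt ℝ (calF f g) y → μ < deriv (calF f g) y) ∧
    (∀ y ∈ Gint g 1 \ Hg, DifferentiableAt ℝ (calG f g) y → μ < deriv (calG f g) y)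

/-- The ruination region `R_f = 𝓕⁻¹(Hg) ⊆ F₁`. -/
def Rf (f g : ℝ → ℝ) (Hg : Set ℝ) : Set ℝ :=
  {x | x ∈ Fint f 1 \ {f 1} ∧ calF f g x ∈ Hg}

/-- The ruination region `R_g = 𝓖⁻¹(Hf) ⊆ G₁`. -/
def Rg (f g : ℝ → ℝ) (Hf : Set ℝ) : Set ℝ :=
  {x | x ∈ Gint g 1 \ {g 0} ∧ calG f g x ∈ Hf}

/-- Castration property `Ca`: `W ⊆ int R_f ∪ int R_g`. -/
def Ca (f g : ℝ → ℝ) (Hf Hg : Set ℝ) : Prop :=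
  ovW f g ⊆ interior (Rf f g Hg) ∪ interior (Rg f g Hf)

/-- Membership in the class `𝒞` with the given holes `(Hf, Hg)`:
`(f,g) ∈ 𝒜` together with `So`, `Ho`, `Ee` and `Ca`. -/
def MemC (f g : ℝ → ℝ) (Hf Hg : Set ℝ) : Prop :=
  MemA f g ∧ So f g ∧ HoleAt f g Hf Hg ∧ Ee f g Hf Hg ∧ Ca f g Hf Hg

/-- The interval `I₋₁ = [0, 1/3 - ε]` of the appendix example. -/
def Im1 (ε : ℝ) : Set ℝ := Set.Icc 0 (1/3 - ε)

/-- The interval `I₀ = [1/3 + ε, 2/3 - ε]` of the appendix example. -/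
def Iz (ε : ℝ) : Set ℝ := Set.Icc (1/3 + ε) (2/3 - ε)

/-- The interval `I₁ = [2/3 + ε, 1]` of the appendix example. -/
def Ip1 (ε : ℝ) : Set ℝ := Set.Icc (2/3 + ε) 1

/-- The inclusion property of the appendix example. -/
def InclusionProp (f g : ℝ → ℝ) (ε : ℝ) : Prop :=
  f '' Im1 ε ⊆ Im1 ε ∧ f '' Iz ε ⊆ interior (Im1 ε) ∧ f '' Ip1 ε ⊆ interior (Iz ε) ∧
  g '' Ip1 ε ⊆ Ip1 ε ∧ g '' Iz ε ⊆ interior (Ip1 ε) ∧ g '' Im1 ε ⊆ interior (Iz ε)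

/-- The strong uniform contraction property of the appendix example. -/
def StrongContraction (f g : ℝ → ℝ) (ε lam : ℝ) : Prop :=
  ∀ x ∈ Im1 ε ∪ Iz ε ∪ Ip1 ε, deriv f x < lam ∧ deriv g x < lam

/-- `φ` iterated until the orbit of `x` first enters `S`; if it never does, the iterate count
is `sInf ∅ = 0` and the value is `x` itself. -/
def firstEntry {α : Type*} (φ : α → α) (S : Set α) (x : α) : α :=
  φ^[sInf {n | φ^[n] x ∈ S}] x

theorem firstEntry_induction {α : Type*} {φ : α → α} {S : Set α} {P : α → Prop}
    (step : ∀ y, P y → y ∉ S → P (φ y)) {x : α} (hx : P x) : P (firstEntry φ S x) := by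
  have key : ∀ j ≤ sInf {n | φ^[n] x ∈ S}, P (φ^[j] x) := by
    intro j hj
    induction j with
    | zero => exact hx
    | succ j ih =>
      rw [Function.iterate_succ_apply']
      exact step _ (ih (by omega)) (Nat.notMem_of_lt_sInf (Nat.lt_of_succ_le hj))
  exact key _ le_rfl

theorem calF_eq_firstEntry (f g : ℝ → ℝ) (x : ℝ) :
    calF f g x = firstEntry (invFunOn g unitI) (Gint g 1) (invFunOn f unitI x) := rfl

theorem calG_eq_firstEntry (f g : ℝ → ℝ) (x : ℝ) :
    calG f g x = firstEntry (invFunOn f unitI) (Fint f 1) (invFunOn g unitI x) := rfl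

section Orbit

variable {f g : ℝ → ℝ}

theorem word_map_not (f g : ℝ → ℝ) (w : List Bool) : word g f (w.map not) = word f g w := by
  induction w with
  | nil => rfl
  | cons b t ih => cases b <;> simp [word, ih]

theorem orbitP_comm (f g : ℝ → ℝ) (x : ℝ) : orbitP g f x = orbitP f g x := by
  ext y
  constructor
  · rintro ⟨w, hw, rfl⟩
    exact ⟨w.map not, by simpa using hw, congrFun (word_map_not g f w) x⟩
  · rintro ⟨w, hw, rfl⟩
    exact ⟨w.map not, by simpa using hw, congrFun (word_map_not f g w) x⟩

theorem word_mapsTo {s : Set ℝ} (hf : MapsTo f s s) (hg : MapsTo g s s) (w : List Bool) :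
    MapsTo (word f g w) s s := by
  induction w with
  | nil => exact mapsTo_id s
  | cons b t ih => cases b <;> simp only [word] <;> [exact hg.comp ih; exact hf.comp ih]

theorem orbitP_subset {s : Set ℝ} (hf : MapsTo f s s) (hg : MapsTo g s s) {x : ℝ}
    (hx : x ∈ s) : orbitP f g x ⊆ s := by
  rintro _ ⟨w, -, rfl⟩
  exact word_mapsTo hf hg w hx

theorem eq_or_exists_of_mem_orbitP {x y : ℝ} (hy : y ∈ orbitP f g x) :
    ∃ z, (z = x ∨ z ∈ orbitP f g x) ∧ (y = f z ∨ y = g z) := by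
  obtain ⟨_ | ⟨b, t⟩, hw, rfl⟩ := hy
  · exact absurd rfl hw
  · refine ⟨word f g t x, ?_, by cases b <;> simp [word]⟩
    rcases t with _ | ⟨c, u⟩
    · exact Or.inl rfl
    · exact Or.inr ⟨c :: u, List.cons_ne_nil c u, rfl⟩

theorem exists_mem_orbitP_eq_of_notMem_image {s : Set ℝ} (hf : MapsTo f s s)
    (hg : MapsTo g s s) {x y : ℝ} (hx : x ∈ s) (hy : y ∈ orbitP f g x) (hyf : y ∉ f '' s)
    (hyg : y ≠ g x) : ∃ z ∈ orbitP f g x, g z = y := by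
  obtain ⟨z, rfl | hz, rfl | rfl⟩ := eq_or_exists_of_mem_orbitP hy
  · exact absurd (mem_image_of_mem f hx) hyf
  · exact absurd rfl hyg
  · exact absurd (mem_image_of_mem f (orbitP_subset hf hg hx hz)) hyf
  · exact ⟨z, hz, rfl⟩

end Orbit

theorem zero_mem_unitI : (0 : ℝ) ∈ unitI := ⟨le_rfl, zero_le_one⟩

theorem one_mem_unitI : (1 : ℝ) ∈ unitI := ⟨zero_le_one, le_rfl⟩

theorem Fint_one (f : ℝ → ℝ) : Fint f 1 = Icc (f (f 1)) (f 1) := rfl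

theorem Gint_one (g : ℝ → ℝ) : Gint g 1 = Icc (g 0) (g (g 0)) := rfl

namespace MemA

variable {f g : ℝ → ℝ} (hA : MemA f g)
include hA

theorem f_strictMonoOn : StrictMonoOn f unitI :=
  ContinuousOn.strictMonoOn_of_injOn_Icc zero_le_one
    (by rw [hA.f_zero]; exact (hA.g0_pos.trans hA.g0_lt_f1).le)
    hA.f_c1.continuous.continuousOn hA.f_inj

theorem g_strictMonoOn : StrictMonoOn g unitI :=
  ContinuousOn.strictMonoOn_of_injOn_Icc zero_le_one
    (by rw [hA.g_one]; exact (hA.g0_lt_f1.trans hA.f1_lt_one).le)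
    hA.g_c1.continuous.continuousOn hA.g_inj

theorem le_f_one_of_mem_image {y : ℝ} (hy : y ∈ f '' unitI) : y ≤ f 1 := by
  obtain ⟨z, hz, rfl⟩ := hy
  exact hA.f_strictMonoOn.monotoneOn hz one_mem_unitI hz.2

theorem g_zero_le_of_mem_image {y : ℝ} (hy : y ∈ g '' unitI) : g 0 ≤ y := by
  obtain ⟨z, hz, rfl⟩ := hy
  exact hA.g_strictMonoOn.monotoneOn zero_mem_unitI hz hz.1

theorem f_one_mem_unitI : f 1 ∈ unitI := hA.f_maps one_mem_unitI

theorem g_zero_mem_unitI : g 0 ∈ unitI := hA.g_maps zero_mem_unitI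

theorem exists_g_preimage {x y : ℝ} (hx : x ∈ unitI) (hy : y ∈ orbitP f g x)
    (hyf : f 1 < y) (hyg : y ≠ g x) :
    ∃ z ∈ orbitP f g x ∩ unitI, invFunOn g unitI y = z ∧ g z = y := by
  obtain ⟨z, hz, rfl⟩ := exists_mem_orbitP_eq_of_notMem_image hA.f_maps hA.g_maps hx hy
    (fun h => (hA.le_f_one_of_mem_image h).not_gt hyf) hyg
  have hzI := orbitP_subset hA.f_maps hA.g_maps hx hz
  exact ⟨z, ⟨hz, hzI⟩, hA.g_inj.leftInvOn_invFunOn hzI, rfl⟩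

theorem exists_f_preimage {x y : ℝ} (hx : x ∈ unitI) (hy : y ∈ orbitP f g x)
    (hyg : y < g 0) (hyf : y ≠ f x) :
    ∃ z ∈ orbitP f g x ∩ unitI, invFunOn f unitI y = z ∧ f z = y := by
  rw [← orbitP_comm] at hy ⊢
  obtain ⟨z, hz, rfl⟩ := exists_mem_orbitP_eq_of_notMem_image hA.g_maps hA.f_maps hx hy
    (fun h => (hA.g_zero_le_of_mem_image h).not_gt hyg) hyf
  have hzI := orbitP_subset hA.g_maps hA.f_maps hx hz
  exact ⟨z, ⟨hz, hzI⟩, hA.f_inj.leftInvOn_invFunOn hzI, rfl⟩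

theorem invFunOn_f_mem_orbitP_zero {p : ℝ} (hp : p ∈ Fint f 1 \ ovW f g)
    (hpO : p ∈ orbitP f g 0) :
    invFunOn f unitI p ∈ orbitP f g 0 ∧ g 0 ≤ invFunOn f unitI p := by
  rw [Fint_one] at hp
  obtain ⟨⟨hp₁, hp₂⟩, hpW⟩ := hp
  have hpg : p < g 0 := lt_of_not_ge fun h => hpW ⟨h, hp₂⟩
  have hff : 0 < f (f 1) := hA.f_zero ▸ hA.f_strictMonoOn zero_mem_unitI hA.f_one_mem_unitI
    (hA.g0_pos.trans hA.g0_lt_f1)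
  obtain ⟨z, ⟨hz, hzI⟩, hinv, rfl⟩ :=
    hA.exists_f_preimage zero_mem_unitI hpO hpg (by rw [hA.f_zero]; linarith)
  have hz₁ : f 1 ≤ z := (hA.f_strictMonoOn.le_iff_le hA.f_one_mem_unitI hzI).1 hp₁
  rw [hinv]
  exact ⟨hz, hA.g0_lt_f1.le.trans hz₁⟩

theorem invFunOn_g_mem_orbitP_one {p : ℝ} (hp : p ∈ Gint g 1 \ ovW f g)
    (hpO : p ∈ orbitP f g 1) :
    invFunOn g unitI p ∈ orbitP f g 1 ∧ invFunOn g unitI p ≤ f 1 := by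
  rw [Gint_one] at hp
  obtain ⟨⟨hp₁, hp₂⟩, hpW⟩ := hp
  have hpf : f 1 < p := lt_of_not_ge fun h => hpW ⟨hp₁, h⟩
  have hgg : g (g 0) < 1 := hA.g_one ▸ hA.g_strictMonoOn hA.g_zero_mem_unitI one_mem_unitI
    (hA.g0_lt_f1.trans hA.f1_lt_one)
  obtain ⟨z, ⟨hz, hzI⟩, hinv, rfl⟩ :=
    hA.exists_g_preimage one_mem_unitI hpO hpf (by rw [hA.g_one]; linarith)
  have hz₀ : z ≤ g 0 := (hA.g_strictMonoOn.le_iff_le hzI hA.g_zero_mem_unitI).1 hp₂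
  rw [hinv]
  exact ⟨hz, hz₀.trans hA.g0_lt_f1.le⟩

variable (hSo : So f g)
include hSo

theorem invFunOn_g_mem_orbitP_zero {y : ℝ} (hy : y ∈ orbitP f g 0 ∧ g 0 ≤ y)
    (hyG : y ∉ Gint g 1) :
    invFunOn g unitI y ∈ orbitP f g 0 ∧ g 0 ≤ invFunOn g unitI y := by
  have hgg : g (g 0) < y := lt_of_not_ge fun h => hyG ⟨hy.2, h⟩
  obtain ⟨z, ⟨hz, hzI⟩, hinv, rfl⟩ := hA.exists_g_preimage zero_mem_unitI hy.1
    (hSo.2.trans hgg) (by linarith [hA.g0_lt_f1, hSo.2])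
  have hz₀ : g 0 < z := (hA.g_strictMonoOn.lt_iff_lt hA.g_zero_mem_unitI hzI).1 hgg
  rw [hinv]
  exact ⟨hz, hz₀.le⟩

theorem invFunOn_f_mem_orbitP_one {y : ℝ} (hy : y ∈ orbitP f g 1 ∧ y ≤ f 1)
    (hyF : y ∉ Fint f 1) :
    invFunOn f unitI y ∈ orbitP f g 1 ∧ invFunOn f unitI y ≤ f 1 := by
  have hff : y < f (f 1) := lt_of_not_ge fun h => hyF ⟨h, hy.2⟩
  obtain ⟨z, ⟨hz, hzI⟩, hinv, rfl⟩ := hA.exists_f_preimage one_mem_unitI hy.1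
    (hff.trans hSo.1) (by linarith [hA.g0_lt_f1, hSo.1])
  have hz₁ : z < f 1 := (hA.f_strictMonoOn.lt_iff_lt hzI hA.f_one_mem_unitI).1 hff
  rw [hinv]
  exact ⟨hz, hz₁.le⟩

end MemA

/-- for `(f,g) ∈ 𝒜` with `So`: if `p ∈ F₁ \ W` lies in `O₊(0)`, then
`𝓕 p ∈ O₊(0)`; symmetrically, if `p ∈ G₁ \ W` lies in `O₊(1)`, then `𝓖 p ∈ O₊(1)`. -/
theorem induced_map_preserves_orbit (f g : ℝ → ℝ) (hA : MemA f g) (hSo : So f g) :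
    (∀ p ∈ Fint f 1 \ ovW f g, p ∈ orbitP f g 0 → calF f g p ∈ orbitP f g 0) ∧
    (∀ p ∈ Gint g 1 \ ovW f g, p ∈ orbitP f g 1 → calG f g p ∈ orbitP f g 1) := by
  constructor
  · intro p hp hpO
    rw [calF_eq_firstEntry]
    exact (firstEntry_induction (fun _ => hA.invFunOn_g_mem_orbitP_zero hSo)
      (hA.invFunOn_f_mem_orbitP_zero hp hpO)).1
  · intro p hp hpO
    rw [calG_eq_firstEntry]
    exact (firstEntry_induction (fun _ => hA.invFunOn_f_mem_orbitP_one hSo)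
      (hA.invFunOn_g_mem_orbitP_one hp hpO)).1

end IFSPaper
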